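/- arXiv:2106.01989 — 8 statements merged into one kernel-verified Lean document; each statement's English description precedes it below -/
import Mathlib

section
/- For n ≥ 2, all complex roots of the polynomial x^3 - (n+2)x^2 + (2n-1)x + 1 are real. -/
/-!
A real cubic with a non-real root `z` has the roots `z`, `conj z` and a real `w`, so its
discriminant `((z - conj z) (z - w) (conj z - w))² = -4 (Im z)² |z - w|⁴` is nonpositive.
The discriminant of `χ` is `4 (n² - 2n)² + 21 (n - 1)² + 28 > 0`.
-/

namespace Cubic

theorem discr_monic_eq_of_im_ne_zero {p q r : ℝ} {z : ℂ}
    (hz : z ^ 3 + p * z ^ 2 + q * z + r = 0) (hb : z.im ≠ 0) :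
    (⟨1, p, q, r⟩ : Cubic ℝ).discr = -4 * z.im ^ 2 * ((3 * z.re + p) ^ 2 + z.im ^ 2) ^ 2 := by
  have hre := congrArg Complex.re hz
  have him := congrArg Complex.im hz
  simp only [pow_succ, pow_zero, one_mul, Complex.add_re, Complex.add_im, Complex.mul_re,
    Complex.mul_im, Complex.ofReal_re, Complex.ofReal_im, Complex.zero_re, Complex.zero_im]
    at hre him
  set a := z.re
  set b := z.im
  -- Vieta for the roots `a ± b i` and `w = -p - 2a`; note `z - w = (3a + p) + b i`.
  have hq : q = b ^ 2 - 3 * a ^ 2 - 2 * p * a := by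
    have : b * (3 * a ^ 2 - b ^ 2 + 2 * p * a + q) = 0 := by linear_combination him
    linear_combination (mul_eq_zero.mp this).resolve_left hb
  have hr : r = (a ^ 2 + b ^ 2) * (p + 2 * a) := by
    subst hq
    linear_combination hre
  subst hq hr
  simp only [discr]
  ring

theorem im_eq_zero_of_discr_pos {p q r : ℝ} (hdiscr : 0 < (⟨1, p, q, r⟩ : Cubic ℝ).discr)
    {z : ℂ} (hz : z ^ 3 + p * z ^ 2 + q * z + r = 0) : z.im = 0 := by
  by_contra hb
  rw [discr_monic_eq_of_im_ne_zero hz hb] at hdiscr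
  have : 0 ≤ 4 * z.im ^ 2 * ((3 * z.re + p) ^ 2 + z.im ^ 2) ^ 2 := by positivity
  linarith

end Cubic

theorem roots_real_general (n : ℤ) (z : ℂ)
    (hz : z ^ 3 - ((n : ℂ) + 2) * z ^ 2 + (2 * (n : ℂ) - 1) * z + 1 = 0) :
    z.im = 0 := by
  have hdiscr : (⟨1, -(n + 2), 2 * n - 1, 1⟩ : Cubic ℝ).discr
      = 4 * (n ^ 2 - 2 * n) ^ 2 + 21 * (n - 1) ^ 2 + 28 := by
    simp only [Cubic.discr]
    ring
  refine Cubic.im_eq_zero_of_discr_pos (by rw [hdiscr]; positivity) ?_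
  push_cast
  linear_combination hz

theorem roots_real (n : ℤ) (hn : 2 ≤ n) (z : ℂ)
    (hz : z ^ 3 - ((n : ℂ) + 2) * z ^ 2 + (2 * (n : ℂ) - 1) * z + 1 = 0) :
    z.im = 0 :=
  roots_real_general n z hz
end

section
/- Let α₁,…,α_k be real numbers with |α_i| ≠ 1 for all i, and suppose ∏_{i=1}^k |1 - α_i²| > 1. Then for every integer m > 2, ∏_{i=1}^k |1 - α_i^m| > ∏_{i=1}^k |1 - α_i²| > 1. -/
/-!
Since `α ^ 2 = |α| ^ 2` and `|1 - |α| ^ m| ≤ |1 - α ^ m|`, each factor satisfies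
`|1 - α ^ 2| ≤ |1 - α ^ m|`: for `t = |α| ≥ 0` the numbers `1 - t ^ n` (`n ≥ 1`) all have the
sign of `1 - t` and move away from `0` as `n` grows, strictly so when `t > 1`. A factor `|1 - α ^ 2|`
with `|α| ≤ 1` lies in `[0, 1]`, so a product exceeding `1` forces some `|α_i| > 1`, which makes
the inequality of products strict.
-/

namespace Finset

theorem exists_one_lt_of_one_lt_prod {ι R : Type*} [CommMonoidWithZero R] [LinearOrder R]
    [ZeroLEOneClass R] [PosMulMono R] {s : Finset ι} {f : ι → R} (h0 : ∀ i ∈ s, 0 ≤ f i)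
    (h : 1 < ∏ i ∈ s, f i) : ∃ i ∈ s, 1 < f i := by
  by_contra! h1
  exact (prod_le_one h0 h1).not_gt h

end Finset

section AbsOneSubPow

variable {R : Type*} [CommRing R] [LinearOrder R] [IsStrictOrderedRing R]

theorem abs_one_sub_pow_abs_le (a : R) (n : ℕ) : |1 - |a| ^ n| ≤ |1 - a ^ n| := by
  simpa only [abs_one, abs_pow] using abs_abs_sub_abs_le_abs_sub (1 : R) (a ^ n)

theorem abs_one_sub_pow_le_of_le {t : R} (ht : 0 ≤ t) {n m : ℕ} (hnm : n ≤ m) :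
    |1 - t ^ n| ≤ |1 - t ^ m| := by
  rcases le_total t 1 with h | h
  · have hm : t ^ m ≤ t ^ n := pow_le_pow_of_le_one ht h hnm
    rw [abs_of_nonneg (sub_nonneg.2 (pow_le_one₀ ht h)),
      abs_of_nonneg (sub_nonneg.2 (pow_le_one₀ ht h))]
    linarith
  · have hm : t ^ n ≤ t ^ m := pow_le_pow_right₀ h hnm
    rw [abs_of_nonpos (sub_nonpos.2 (one_le_pow₀ h)), abs_of_nonpos (sub_nonpos.2 (one_le_pow₀ h))]
    linarith

theorem abs_one_sub_pow_lt_of_lt {t : R} (ht : 1 < t) {n m : ℕ} (hnm : n < m) :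
    |1 - t ^ n| < |1 - t ^ m| := by
  have hm : t ^ n < t ^ m := pow_lt_pow_right₀ ht hnm
  rw [abs_of_nonpos (sub_nonpos.2 (one_le_pow₀ ht.le)),
    abs_of_nonpos (sub_nonpos.2 (one_le_pow₀ ht.le))]
  linarith

theorem Even.abs_one_sub_pow_le {n m : ℕ} (hn : Even n) (hnm : n ≤ m) (a : R) :
    |1 - a ^ n| ≤ |1 - a ^ m| := by
  rw [← hn.pow_abs]
  exact (abs_one_sub_pow_le_of_le (abs_nonneg a) hnm).trans (abs_one_sub_pow_abs_le a m)

theorem Even.abs_one_sub_pow_lt {n m : ℕ} (hn : Even n) (hnm : n < m) {a : R} (ha : 1 < |a|) :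
    |1 - a ^ n| < |1 - a ^ m| := by
  rw [← hn.pow_abs]
  exact (abs_one_sub_pow_lt_of_lt ha hnm).trans_le (abs_one_sub_pow_abs_le a m)

theorem Even.abs_one_sub_pow_le_one {n : ℕ} (hn : Even n) {a : R} (ha : |a| ≤ 1) :
    |1 - a ^ n| ≤ 1 := by
  have h0 : 0 ≤ |a| ^ n := pow_nonneg (abs_nonneg a) n
  have h1 : |a| ^ n ≤ 1 := pow_le_one₀ (abs_nonneg a) ha
  rw [← hn.pow_abs, abs_sub_le_iff]
  constructor <;> linarith

theorem Even.one_lt_abs_of_one_lt_abs_one_sub_pow {n : ℕ} (hn : Even n) {a : R}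
    (h : 1 < |1 - a ^ n|) : 1 < |a| := by
  by_contra! ha
  exact (hn.abs_one_sub_pow_le_one ha).not_gt h

end AbsOneSubPow

theorem prod_increasing_general (k : ℕ) (α : Fin k → ℝ)
    (hprod : 1 < ∏ i, |1 - α i ^ 2|) :
    ∀ m : ℕ, 2 < m →
      (∏ i, |1 - α i ^ 2|) < ∏ i, |1 - α i ^ m| ∧ 1 < ∏ i, |1 - α i ^ 2| := by
  intro m hm
  have hpos : ∀ i ∈ Finset.univ, 0 < |1 - α i ^ 2| := fun i hi =>
    (abs_nonneg _).lt_of_ne' (Finset.prod_ne_zero_iff.mp (zero_lt_one.trans hprod).ne' i hi)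
  obtain ⟨i, hi, hgt⟩ := Finset.exists_one_lt_of_one_lt_prod (fun i hi => (hpos i hi).le) hprod
  refine ⟨Finset.prod_lt_prod hpos (fun j _ => even_two.abs_one_sub_pow_le hm.le (α j)) ?_, hprod⟩
  exact ⟨i, hi, even_two.abs_one_sub_pow_lt hm (even_two.one_lt_abs_of_one_lt_abs_one_sub_pow hgt)⟩

theorem prod_increasing (k : ℕ) (hk : 1 ≤ k) (α : Fin k → ℝ)
    (hα : ∀ i, |α i| ≠ 1) (hprod : 1 < ∏ i, |1 - α i ^ 2|) :
    ∀ m : ℕ, 2 < m →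
      (∏ i, |1 - α i ^ 2|) < ∏ i, |1 - α i ^ m| ∧ 1 < ∏ i, |1 - α i ^ 2| :=
  prod_increasing_general k α hprod
end

section
/- For n ≥ 2 and m ≥ 2, |det(I - A^m)| ≥ 3n² - 2n - 1 > 1, where A = [[n,1,0],[1,1,1],[0,1,1]]. In particular the cokernel of I - A^m (as a map ℤ³ → ℤ³) is a finite group of order at least 3n² - 2n - 1. -/
/-! For a 3 × 3 matrix `B`, `det (1 - B) = 1 - tr B + tr (adj B) - det B`. Applied to
`B = A ^ m`, with `adj (A ^ m) = (adj A) ^ m` and `det A = -1`, this gives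
`det (1 - A ^ m) ≥ tr ((adj A) ^ m) - tr (A ^ m)`. By Cayley–Hamilton both trace sequences satisfy
three-term recurrences, from which `tr (A ^ (m + 1)) ≤ (n + 1) tr (A ^ m)` and
`tr ((adj A) ^ (m + 1)) ≥ (2n - 1) tr ((adj A) ^ m) ≥ 0` for `m ≥ 2`. So the difference of the
traces can only grow, and at `m = 2` it equals `3n² - 2n - 1`. Finally, the cokernel of an
integer matrix with nonzero determinant has order `|det|` (Smith normal form). -/

open Matrix

namespace Matrix

variable {R : Type*} [CommRing R]

theorem pow_three_fin_three (B : Matrix (Fin 3) (Fin 3) R) :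
    B ^ 3 = B.trace • B ^ 2 - B.adjugate.trace • B + B.det • 1 := by
  ext i j
  fin_cases i <;> fin_cases j <;>
    simp [pow_succ, mul_apply, Fin.sum_univ_three, trace_fin_three, adjugate_fin_three,
      det_fin_three] <;> ring

theorem trace_sq_fin_three (B : Matrix (Fin 3) (Fin 3) R) :
    (B ^ 2).trace = B.trace ^ 2 - 2 * B.adjugate.trace := by
  simp [sq, mul_apply, Fin.sum_univ_three, trace_fin_three, adjugate_fin_three]
  ring

theorem trace_pow_add_three_fin_three (B : Matrix (Fin 3) (Fin 3) R) (k : ℕ) :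
    (B ^ (k + 3)).trace = B.trace * (B ^ (k + 2)).trace
      - B.adjugate.trace * (B ^ (k + 1)).trace + B.det * (B ^ k).trace := by
  have h := congrArg (fun X => trace (B ^ k * X)) B.pow_three_fin_three
  simp only [mul_sub, mul_add, mul_smul_comm, mul_one, ← pow_add, trace_sub, trace_add,
    trace_smul, smul_eq_mul] at h
  exact h

theorem det_one_sub_fin_three (B : Matrix (Fin 3) (Fin 3) R) :
    (1 - B).det = 1 - B.trace + B.adjugate.trace - B.det := by
  simp [det_fin_three, trace_fin_three, adjugate_fin_three]
  ring

variable {ι : Type*} [Fintype ι] [DecidableEq ι]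

theorem natCard_quotient_range_toLin' (M : Matrix ι ι ℤ) (hM : M.det ≠ 0) :
    Nat.card ((ι → ℤ) ⧸ LinearMap.range M.toLin') = M.det.natAbs := by
  have hinj : Function.Injective M.toLin' := by
    rw [← LinearMap.ker_eq_bot, LinearMap.ker_eq_bot']
    exact fun x hx => eq_zero_of_mulVec_eq_zero hM hx
  rw [← (LinearMap.range M.toLin').natAbs_det_equiv (LinearEquiv.ofInjective _ hinj),
    ← LinearMap.det_toLin' M]
  rfl

theorem finite_quotient_range_toLin' (M : Matrix ι ι ℤ) (hM : M.det ≠ 0) :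
    Finite ((ι → ℤ) ⧸ LinearMap.range M.toLin') :=
  Nat.finite_of_card_ne_zero <| by
    rw [natCard_quotient_range_toLin' M hM]
    exact Int.natAbs_ne_zero.mpr hM

end Matrix

theorem nonneg_of_recurrence {a b c : ℤ} {v : ℕ → ℤ} (ha : 0 ≤ a) (hb : 0 ≤ b) (hc : 0 ≤ c)
    (h0 : 0 ≤ v 0) (h1 : 0 ≤ v 1) (h2 : 0 ≤ v 2)
    (hrec : ∀ k, v (k + 3) = a * v (k + 2) + b * v (k + 1) + c * v k) (k : ℕ) : 0 ≤ v k := by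
  induction k using Nat.strong_induction_on with
  | _ k ih =>
    match k, ih with
    | 0, _ => exact h0
    | 1, _ => exact h1
    | 2, _ => exact h2
    | k + 3, ih =>
      rw [hrec]
      have := ih k (by omega)
      have := ih (k + 1) (by omega)
      have := ih (k + 2) (by omega)
      positivity

theorem growth_of_recurrence {n : ℤ} {t : ℕ → ℤ} (hn : 2 ≤ n)
    (h0 : 0 ≤ t 0) (h01 : t 0 ≤ t 1) (h12 : 2 * t 1 ≤ t 2) (h21 : t 2 ≤ (n + 1) * t 1)
    (hrec : ∀ k, t (k + 3) = (n + 2) * t (k + 2) - (2 * n - 1) * t (k + 1) - t k) (k : ℕ) :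
    0 ≤ t k ∧ t k ≤ t (k + 1) ∧ 2 * t (k + 1) ≤ t (k + 2) ∧
      t (k + 2) ≤ (n + 1) * t (k + 1) := by
  induction k with
  | zero => exact ⟨h0, h01, h12, h21⟩
  | succ k ih =>
    obtain ⟨h0, h01, h12, h21⟩ := ih
    have h := hrec k
    refine ⟨by linarith, by linarith, by nlinarith, by nlinarith⟩

theorem le_sub_of_growth {n W : ℤ} {t v : ℕ → ℤ} (hn : 2 ≤ n) (hW : 0 ≤ W)
    (ht : ∀ k, t (k + 1) ≤ (n + 1) * t k) (hv : ∀ k, (2 * n - 1) * v k ≤ v (k + 1))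
    (hv0 : ∀ k, 0 ≤ v k) (h0 : W ≤ v 0 - t 0) (k : ℕ) : W ≤ v k - t k := by
  induction k with
  | zero => exact h0
  | succ k ih =>
    have := ht k; have := hv k; have := hv0 k
    nlinarith

def Amat (n : ℤ) : Matrix (Fin 3) (Fin 3) ℤ := !![n, 1, 0; 1, 1, 1; 0, 1, 1]

section Amat

variable (n : ℤ)

theorem trace_Amat : (Amat n).trace = n + 2 := by
  simp [Amat, trace_fin_three]; ring

theorem trace_adjugate_Amat : (Amat n).adjugate.trace = 2 * n - 1 := by
  simp [Amat, trace_fin_three, adjugate_fin_three]; ring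

theorem det_Amat : (Amat n).det = -1 := by
  simp [Amat, det_fin_three]

theorem trace_adjugate_adjugate_Amat : (Amat n).adjugate.adjugate.trace = -(n + 2) := by
  rw [adjugate_adjugate _ (by simp), trace_smul, det_Amat, trace_Amat]; simp

theorem det_adjugate_Amat : (Amat n).adjugate.det = 1 := by
  simp [det_adjugate, det_Amat]

variable {n}

theorem trace_Amat_pow_succ_le (hn : 2 ≤ n) (k : ℕ) :
    (Amat n ^ (k + 3)).trace ≤ (n + 1) * (Amat n ^ (k + 2)).trace := by
  have h0 : (Amat n ^ 0).trace = 3 := by simp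
  have h1 : (Amat n ^ 1).trace = n + 2 := by rw [pow_one, trace_Amat]
  have h2 : (Amat n ^ 2).trace = n ^ 2 + 6 := by
    rw [trace_sq_fin_three, trace_Amat, trace_adjugate_Amat]; ring
  refine (growth_of_recurrence (t := fun k => (Amat n ^ k).trace) hn
    (by simp only [h0]; norm_num) (by simp only [h0, h1]; linarith)
    (by simp only [h1, h2]; nlinarith) (by simp only [h1, h2]; nlinarith) (fun k => ?_)
    (k + 1)).2.2.2
  simp only [trace_pow_add_three_fin_three, trace_Amat, trace_adjugate_Amat, det_Amat]
  ring

theorem trace_adjugate_Amat_pow_nonneg (hn : 2 ≤ n) (k : ℕ) :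
    0 ≤ ((Amat n).adjugate ^ k).trace := by
  refine nonneg_of_recurrence (v := fun k => ((Amat n).adjugate ^ k).trace)
    (a := 2 * n - 1) (b := n + 2) (c := 1) (by linarith) (by linarith) zero_le_one
    (by simp) (by simp only [pow_one, trace_adjugate_Amat]; linarith) ?_ (fun k => ?_) k
  · simp only [trace_sq_fin_three, trace_adjugate_Amat, trace_adjugate_adjugate_Amat]
    nlinarith
  · simp only [trace_pow_add_three_fin_three, trace_adjugate_Amat,
      trace_adjugate_adjugate_Amat, det_adjugate_Amat]
    ring

theorem le_trace_adjugate_Amat_pow_succ (hn : 2 ≤ n) (k : ℕ) :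
    (2 * n - 1) * ((Amat n).adjugate ^ (k + 2)).trace ≤ ((Amat n).adjugate ^ (k + 3)).trace := by
  have := trace_adjugate_Amat_pow_nonneg hn k
  have := trace_adjugate_Amat_pow_nonneg hn (k + 1)
  rw [trace_pow_add_three_fin_three, trace_adjugate_Amat, trace_adjugate_adjugate_Amat,
    det_adjugate_Amat]
  nlinarith

theorem le_det_one_sub_Amat_pow (hn : 2 ≤ n) {m : ℕ} (hm : 2 ≤ m) :
    3 * n ^ 2 - 2 * n - 1 ≤ (1 - Amat n ^ m).det := by
  obtain ⟨k, rfl⟩ : ∃ k, m = k + 2 := ⟨m - 2, by omega⟩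
  have hbase : ((Amat n).adjugate ^ 2).trace - (Amat n ^ 2).trace = 3 * n ^ 2 - 2 * n - 1 := by
    simp only [trace_sq_fin_three, trace_Amat, trace_adjugate_Amat,
      trace_adjugate_adjugate_Amat]
    ring
  have hsub := le_sub_of_growth (t := fun k => (Amat n ^ (k + 2)).trace)
    (v := fun k => ((Amat n).adjugate ^ (k + 2)).trace) hn (by nlinarith)
    (trace_Amat_pow_succ_le hn) (le_trace_adjugate_Amat_pow_succ hn)
    (fun k => trace_adjugate_Amat_pow_nonneg hn (k + 2)) hbase.ge k
  rw [det_one_sub_fin_three, adjugate_pow, det_pow, det_Amat]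
  rcases neg_one_pow_eq_or ℤ (k + 2) with h | h <;> linarith

end Amat

theorem coker_lower_bound (n : ℤ) (hn : 2 ≤ n) (m : ℕ) (hm : 2 ≤ m) :
    3 * n ^ 2 - 2 * n - 1 ≤
      |(1 - (!![n, 1, 0; 1, 1, 1; 0, 1, 1] : Matrix (Fin 3) (Fin 3) ℤ) ^ m).det| ∧
    1 < 3 * n ^ 2 - 2 * n - 1 ∧
    Finite ((Fin 3 → ℤ) ⧸ LinearMap.range (Matrix.toLin'
      (1 - (!![n, 1, 0; 1, 1, 1; 0, 1, 1] : Matrix (Fin 3) (Fin 3) ℤ) ^ m))) ∧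
    3 * n ^ 2 - 2 * n - 1 ≤
      (Nat.card ((Fin 3 → ℤ) ⧸ LinearMap.range (Matrix.toLin'
        (1 - (!![n, 1, 0; 1, 1, 1; 0, 1, 1] : Matrix (Fin 3) (Fin 3) ℤ) ^ m))) : ℤ) := by
  rw [show (!![n, 1, 0; 1, 1, 1; 0, 1, 1] : Matrix (Fin 3) (Fin 3) ℤ) = Amat n from rfl]
  have hdet := le_det_one_sub_Amat_pow hn hm
  have hdet_abs := hdet.trans (le_abs_self _)
  have hdet_ne : (1 - Amat n ^ m).det ≠ 0 := by nlinarith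
  refine ⟨hdet_abs, by nlinarith, finite_quotient_range_toLin' _ hdet_ne, ?_⟩
  rwa [natCard_quotient_range_toLin' _ hdet_ne, Int.natCast_natAbs]
end

section
/- For every n, the quotient ring ℤ[C_m]/⟨1 - nτ⟩ (τ a generator of C_m, m finite) is isomorphic as an abelian group to ℤ/(n^m - 1)ℤ, with τ acting as multiplication by n^{m-1}. -/
/-!
In `R = ℤ[C_m]/(1 - nτ)` we have `nτ = 1` and `τ ^ m = 1`, hence `n ^ m = 1` and
`τ = n ^ (m - 1)`: every element of `R` is an integer, and `n ^ m - 1 = 0` in `R`. Conversely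
`n ^ (m - 1)` is an `m`-th root of unity in `ℤ/(n ^ m - 1)` with `n · n ^ (m - 1) = 1`, so
`τ ↦ n ^ (m - 1)` gives a ring map `R → ℤ/(n ^ m - 1)`. A ring map to `ZMod N` out of a
quotient of `ℤ` in which `N = 0` is bijective.
-/

theorem ZMod.natCast_eq_one_mod_sub_one {k : ℕ} (hk : 1 ≤ k) : (k : ZMod (k - 1)) = 1 := by
  have h : ((k - 1 + 1 : ℕ) : ZMod (k - 1)) = 1 := by
    rw [Nat.cast_add, ZMod.natCast_self, zero_add, Nat.cast_one]
  rwa [Nat.sub_add_cancel hk] at h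

theorem ZMod.natCast_pow_eq_one_mod_pow_sub_one {n : ℕ} (hn : 1 ≤ n) (m : ℕ) :
    (n : ZMod (n ^ m - 1)) ^ m = 1 := by
  rw [← Nat.cast_pow]
  exact ZMod.natCast_eq_one_mod_sub_one (Nat.one_le_pow _ _ hn)

theorem pow_eq_one_of_mul_eq_one {M : Type*} [CommMonoid M] {a t : M} {m : ℕ}
    (hat : a * t = 1) (ht : t ^ m = 1) : a ^ m = 1 := by
  rw [← one_pow m, ← hat, mul_pow, ht, mul_one]

theorem eq_pow_pred_of_mul_eq_one {M : Type*} [CommMonoid M] {a t : M} {m : ℕ} (hm : m ≠ 0)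
    (hat : a * t = 1) (ht : t ^ m = 1) : t = a ^ (m - 1) :=
  calc t = a ^ m * t := by rw [pow_eq_one_of_mul_eq_one hat ht, one_mul]
    _ = a ^ (m - 1) * (a * t) := by rw [← mul_assoc, ← pow_succ, Nat.sub_add_cancel (by omega)]
    _ = a ^ (m - 1) := by rw [hat, mul_one]

theorem Multiplicative.ofAdd_one_pow_val {m : ℕ} [NeZero m] (g : Multiplicative (ZMod m)) :
    ofAdd (1 : ZMod m) ^ (toAdd g).val = g := by
  rw [← ofAdd_nsmul, nsmul_one, ZMod.natCast_zmod_val, ofAdd_toAdd]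

theorem MonoidAlgebra.mem_bot_of_forall_of {G S : Type*} [Monoid G] [Ring S]
    (f : MonoidAlgebra ℤ G →+* S) (hf : ∀ g, f (of ℤ G g) ∈ (⊥ : Subring S))
    (x : MonoidAlgebra ℤ G) : f x ∈ (⊥ : Subring S) := by
  induction x using MonoidAlgebra.induction_on with
  | of g => exact hf g
  | add x y hx hy => rw [map_add]; exact add_mem hx hy
  | smul r x hx => rw [map_zsmul]; exact zsmul_mem hx r

theorem ZMod.ringHom_bijective_of_intCast_surjective {R : Type*} [Ring R] {N : ℕ}
    (hR : Function.Surjective (Int.cast : ℤ → R)) (hN : (N : R) = 0) (φ : R →+* ZMod N) :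
    Function.Bijective φ := by
  let ψ := ZMod.castHom (ringChar.dvd hN) R
  have hψφ : Function.LeftInverse ψ φ := by
    intro x
    obtain ⟨k, rfl⟩ := hR x
    simp only [map_intCast]
  have hφψ : Function.LeftInverse φ ψ :=
    RingHom.congr_fun (Subsingleton.elim (φ.comp ψ) (.id _))
  exact ⟨hψφ.injective, hφψ.surjective⟩

namespace CyclicGroupRing

variable (n m : ℕ)

local notation "τ" => MonoidAlgebra.of ℤ (Multiplicative (ZMod m)) (Multiplicative.ofAdd 1)

local notation "I" => Ideal.span {1 - (n : MonoidAlgebra ℤ (Multiplicative (ZMod m))) * τ}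

theorem of_ofAdd_one_pow_self : τ ^ m = 1 := by
  rw [← map_pow, ← ofAdd_nsmul, nsmul_one, ZMod.natCast_self, ofAdd_zero, map_one]

theorem natCast_mul_mk_of_ofAdd_one : (n : _ ⧸ I) * Ideal.Quotient.mk I τ = 1 := by
  have h : Ideal.Quotient.mk I (1 - n * τ) = 0 :=
    Ideal.Quotient.eq_zero_iff_mem.2 (Ideal.subset_span rfl)
  rwa [map_sub, map_one (Ideal.Quotient.mk _), map_mul, map_natCast, sub_eq_zero, eq_comm] at h

theorem mk_of_ofAdd_one_pow_self : Ideal.Quotient.mk I τ ^ m = 1 := by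
  rw [← map_pow, of_ofAdd_one_pow_self, map_one (Ideal.Quotient.mk _)]

theorem mk_of_ofAdd_one_eq_pow [NeZero m] : Ideal.Quotient.mk I τ = (n : _ ⧸ I) ^ (m - 1) :=
  eq_pow_pred_of_mul_eq_one (NeZero.ne m) (natCast_mul_mk_of_ofAdd_one n m)
    (mk_of_ofAdd_one_pow_self n m)

theorem natCast_pow_sub_one_eq_zero (hn : 1 ≤ n) : ((n ^ m - 1 : ℕ) : _ ⧸ I) = 0 := by
  push_cast [Nat.one_le_pow _ _ hn]
  rw [pow_eq_one_of_mul_eq_one (natCast_mul_mk_of_ofAdd_one n m) (mk_of_ofAdd_one_pow_self n m),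
    sub_self]

theorem intCast_surjective [NeZero m] : Function.Surjective (Int.cast : ℤ → _ ⧸ I) := by
  intro x
  obtain ⟨p, rfl⟩ := Ideal.Quotient.mk_surjective x
  refine Subring.mem_bot.1 (MonoidAlgebra.mem_bot_of_forall_of _ (fun g => ?_) p)
  rw [← Multiplicative.ofAdd_one_pow_val g, map_pow, map_pow, mk_of_ofAdd_one_eq_pow]
  exact pow_mem (pow_mem (natCast_mem _ n) _) _

noncomputable def toZMod [NeZero m] (hn : 1 ≤ n) :
    MonoidAlgebra ℤ (Multiplicative (ZMod m)) →+* ZMod (n ^ m - 1) :=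
  have hζ : ((n : ZMod (n ^ m - 1)) ^ (m - 1)) ^ m = 1 := by
    rw [pow_right_comm, ZMod.natCast_pow_eq_one_mod_pow_sub_one hn, one_pow]
  (MonoidAlgebra.lift ℤ (ZMod (n ^ m - 1)) _ (AddChar.zmodChar m hζ).toMonoidHom).toRingHom

theorem toZMod_of_ofAdd_one [NeZero m] (hn : 1 ≤ n) :
    toZMod n m hn τ = (n : ZMod (n ^ m - 1)) ^ (m - 1) := by
  simpa [toZMod] using AddChar.zmodChar_apply' _ 1

theorem span_le_ker_toZMod [NeZero m] (hn : 1 ≤ n) : I ≤ RingHom.ker (toZMod n m hn) := by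
  rw [Ideal.span_singleton_le_iff_mem, RingHom.mem_ker, map_sub, map_one, map_mul, map_natCast,
    toZMod_of_ofAdd_one, ← pow_succ', Nat.sub_add_cancel NeZero.one_le,
    ZMod.natCast_pow_eq_one_mod_pow_sub_one hn, sub_self]

end CyclicGroupRing

theorem bf_rose_group_ring (n : ℕ) (hn : 1 ≤ n) (m : ℕ) (hm : 2 ≤ m) :
    ∃ e : (MonoidAlgebra ℤ (Multiplicative (ZMod m)) ⧸
        Ideal.span {(1 : MonoidAlgebra ℤ (Multiplicative (ZMod m))) -
          (n : MonoidAlgebra ℤ (Multiplicative (ZMod m))) *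
            MonoidAlgebra.of ℤ (Multiplicative (ZMod m)) (Multiplicative.ofAdd 1)}) ≃+
      ZMod (n ^ m - 1),
      ∀ q, e (Ideal.Quotient.mk _
          (MonoidAlgebra.of ℤ (Multiplicative (ZMod m)) (Multiplicative.ofAdd 1)) * q) =
        (n : ZMod (n ^ m - 1)) ^ (m - 1) * e q := by
  have : NeZero m := ⟨by omega⟩
  let φ := Ideal.Quotient.lift _ (CyclicGroupRing.toZMod n m hn)
    (fun _ ha => CyclicGroupRing.span_le_ker_toZMod n m hn ha)
  have hφ : Function.Bijective φ := ZMod.ringHom_bijective_of_intCast_surjective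
    (CyclicGroupRing.intCast_surjective n m) (CyclicGroupRing.natCast_pow_sub_one_eq_zero n m hn) φ
  refine ⟨(RingEquiv.ofBijective φ hφ).toAddEquiv, fun q => ?_⟩
  change φ (_ * q) = _ * φ q
  rw [map_mul]
  exact congrArg (· * φ q) (CyclicGroupRing.toZMod_of_ofAdd_one n m hn)
end

section
/- Let n, m ≥ 2 and let I = ⟨x^m - 1, ξ_n(x)⟩ ⊆ ℤ[x] where ξ_n(x) = x³ + (2n-1)x² - (n+2)x + 1. If (1-nx)² ∈ I, then (n-1)² ∈ I, (n+1)x - 2 ∈ I, and (x-1)² ∈ I. -/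
/-!
Work in `R ⧸ I` with `c` the image of `n` and `y = 1 - c x`, so that `ξ(x) = 0` and `y² = 0`.
Substituting `c x = 1 - y` gives `c³ ξ(x) = (1 - c) + y t` for a polynomial `t`, so `c - 1` is a
multiple of `y` and `(c - 1)² = 0`. With `d = c - 1` and `u = x - 1` one has
`ξ(x) = u (2 + 4u + u²) + d (1 + 3u + 2u²)` and `y² = (u + d + d u)²`; from `d² = y² = 0` these
force `u² = -2 d u`, then `2u + d = 5 d u`, and multiplying the latter by `d` and by `u` gives
`2 d u = 3 d u = 0`. Hence `d u = 0`, and both `(c + 1) x - 2 = 2u + d + d u` and `u²` vanish.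
-/

open Polynomial

section

variable {R : Type*} [CommRing R] {c x : R}

theorem sub_one_sq_eq_zero (hξ : x ^ 3 + (2 * c - 1) * x ^ 2 - (c + 2) * x + 1 = 0)
    (hy : (1 - c * x) ^ 2 = 0) : (c - 1) ^ 2 = 0 := by
  have hdvd : c - 1 = (1 - c * x) *
      (c ^ 3 - 2 * c ^ 2 + 2 * c - 3 + (1 - c * x) * (2 * c ^ 2 - c + 3) - (1 - c * x) ^ 2) := by
    linear_combination -c ^ 3 * hξ
  rw [hdvd, mul_pow, hy, zero_mul]

theorem sub_one_mul_sub_one_eq_zero (hξ : x ^ 3 + (2 * c - 1) * x ^ 2 - (c + 2) * x + 1 = 0)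
    (hy : (1 - c * x) ^ 2 = 0) : (c - 1) * (x - 1) = 0 := by
  have hd := sub_one_sq_eq_zero hξ hy
  have hdu_sq : (c - 1) * (x - 1) ^ 2 = 0 := by
    linear_combination (c - 1) * hy - (2 * (x - 1) * c + (c - 1) + (x - 1) ^ 2 * (c + 1)) * hd
  have hu_sq : (x - 1) ^ 2 = -2 * (c - 1) * (x - 1) := by
    linear_combination hy - 2 * hdu_sq - x ^ 2 * hd
  have hlin : 2 * (x - 1) + (c - 1) = 5 * (c - 1) * (x - 1) := by
    linear_combination hξ - (x + 3) * hu_sq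
  have htwo : 2 * ((c - 1) * (x - 1)) = 0 := by
    linear_combination (c - 1) * hlin + (5 * x - 6) * hd
  have hthree : 3 * ((c - 1) * (x - 1)) = 0 := by
    linear_combination -(x - 1) * hlin + 2 * hu_sq - 5 * hdu_sq
  linear_combination hthree - htwo

theorem steps_eq_zero (hξ : x ^ 3 + (2 * c - 1) * x ^ 2 - (c + 2) * x + 1 = 0)
    (hy : (1 - c * x) ^ 2 = 0) :
    (c - 1) ^ 2 = 0 ∧ (c + 1) * x - 2 = 0 ∧ (x - 1) ^ 2 = 0 := by
  have hd := sub_one_sq_eq_zero hξ hy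
  have hdu := sub_one_mul_sub_one_eq_zero hξ hy
  refine ⟨hd, ?_, ?_⟩
  · linear_combination hξ - (x + 3) * hy + (x + 3) * x ^ 2 * hd + 2 * (x + 2) * x * hdu
  · linear_combination hy - x ^ 2 * hd - 2 * x * hdu

theorem steps_mem_of_mem {I : Ideal R}
    (hξ : x ^ 3 + (2 * c - 1) * x ^ 2 - (c + 2) * x + 1 ∈ I) (hy : (1 - c * x) ^ 2 ∈ I) :
    (c - 1) ^ 2 ∈ I ∧ (c + 1) * x - 2 ∈ I ∧ (x - 1) ^ 2 ∈ I := by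
  simp only [← Ideal.Quotient.eq_zero_iff_mem, map_sub, map_add, map_mul, map_pow, map_one,
    map_ofNat] at hξ hy ⊢
  exact steps_eq_zero hξ hy

end

theorem steps_membership_general (n m : ℕ)
    (h : ((1 : ℤ[X]) - C (n : ℤ) * X) ^ 2 ∈
      Ideal.span {(X : ℤ[X]) ^ m - 1,
        X ^ 3 + C (2 * (n : ℤ) - 1) * X ^ 2 - C ((n : ℤ) + 2) * X + 1}) :
    C (((n : ℤ) - 1) ^ 2) ∈
        Ideal.span {(X : ℤ[X]) ^ m - 1,
          X ^ 3 + C (2 * (n : ℤ) - 1) * X ^ 2 - C ((n : ℤ) + 2) * X + 1} ∧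
      C ((n : ℤ) + 1) * X - 2 ∈
        Ideal.span {(X : ℤ[X]) ^ m - 1,
          X ^ 3 + C (2 * (n : ℤ) - 1) * X ^ 2 - C ((n : ℤ) + 2) * X + 1} ∧
      ((X : ℤ[X]) - 1) ^ 2 ∈
        Ideal.span {(X : ℤ[X]) ^ m - 1,
          X ^ 3 + C (2 * (n : ℤ) - 1) * X ^ 2 - C ((n : ℤ) + 2) * X + 1} := by
  have hξ : X ^ 3 + (2 * C (n : ℤ) - 1) * X ^ 2 - (C (n : ℤ) + 2) * X + 1 ∈
      Ideal.span {(X : ℤ[X]) ^ m - 1,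
        X ^ 3 + C (2 * (n : ℤ) - 1) * X ^ 2 - C ((n : ℤ) + 2) * X + 1} := by
    apply Ideal.subset_span
    simp
  simpa using steps_mem_of_mem hξ h

theorem steps_membership (n m : ℕ) (hn : 2 ≤ n) (hm : 2 ≤ m)
    (h : ((1 : ℤ[X]) - C (n : ℤ) * X) ^ 2 ∈
      Ideal.span {(X : ℤ[X]) ^ m - 1,
        X ^ 3 + C (2 * (n : ℤ) - 1) * X ^ 2 - C ((n : ℤ) + 2) * X + 1}) :
    C (((n : ℤ) - 1) ^ 2) ∈
        Ideal.span {(X : ℤ[X]) ^ m - 1,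
          X ^ 3 + C (2 * (n : ℤ) - 1) * X ^ 2 - C ((n : ℤ) + 2) * X + 1} ∧
      C ((n : ℤ) + 1) * X - 2 ∈
        Ideal.span {(X : ℤ[X]) ^ m - 1,
          X ^ 3 + C (2 * (n : ℤ) - 1) * X ^ 2 - C ((n : ℤ) + 2) * X + 1} ∧
      ((X : ℤ[X]) - 1) ^ 2 ∈
        Ideal.span {(X : ℤ[X]) ^ m - 1,
          X ^ 3 + C (2 * (n : ℤ) - 1) * X ^ 2 - C ((n : ℤ) + 2) * X + 1} :=
  steps_membership_general n m h
end

section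
/- Let n, m ≥ 2 and I = ⟨x^m - 1, ξ_n(x)⟩ ⊆ ℤ[x] with ξ_n(x) = x³ + (2n-1)x² - (n+2)x + 1. If (1-nx)² ∈ I, then I = ⟨(x-1)², m(x-1), (3n-1)(x-1) + (n-1)⟩. -/
/-!
Modulo `(X - 1)²` one has `X ^ m - 1 ≡ m (X - 1)` and `ξₙ ≡ (3n - 1)(X - 1) + (n - 1)`, so the two
ideals coincide as soon as `(X - 1)² ∈ I`. That follows from the hypothesis through an explicit
identity writing `(X - 1)²` as a `ℤ[X]`-combination of `(1 - nX)²` and `ξₙ`.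
-/

open Polynomial

variable {R : Type*} [CommRing R]

theorem Ideal.span_pair_eq_span_triple_of_eq_add_mul {a b c d e p q : R}
    (ha : a = c + e * p) (hb : b = d + e * q) (he : e ∈ Ideal.span {a, b}) :
    Ideal.span {a, b} = Ideal.span {e, c, d} := by
  have ha_mem : a ∈ Ideal.span {a, b} := Ideal.subset_span (by simp)
  have hb_mem : b ∈ Ideal.span {a, b} := Ideal.subset_span (by simp)
  have he_mem : e ∈ Ideal.span {e, c, d} := Ideal.subset_span (by simp)
  have hc_mem : c ∈ Ideal.span {e, c, d} := Ideal.subset_span (by simp)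
  have hd_mem : d ∈ Ideal.span {e, c, d} := Ideal.subset_span (by simp)
  apply le_antisymm
  · simp only [Ideal.span_le, Set.insert_subset_iff, Set.singleton_subset_iff, SetLike.mem_coe]
    exact ⟨ha ▸ add_mem hc_mem (Ideal.mul_mem_right _ _ he_mem),
      hb ▸ add_mem hd_mem (Ideal.mul_mem_right _ _ he_mem)⟩
  · simp only [Ideal.span_le, Set.insert_subset_iff, Set.singleton_subset_iff, SetLike.mem_coe]
    refine ⟨he, ?_, ?_⟩
    · rw [eq_sub_of_add_eq ha.symm]
      exact sub_mem ha_mem (Ideal.mul_mem_right _ _ he)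
    · rw [eq_sub_of_add_eq hb.symm]
      exact sub_mem hb_mem (Ideal.mul_mem_right _ _ he)

theorem Polynomial.X_pow_sub_one_eq_C_mul_add_sq_mul (m : ℕ) :
    ∃ q : R[X], X ^ m - 1 = C (m : R) * (X - 1) + (X - 1) ^ 2 * q := by
  induction m with
  | zero => exact ⟨0, by simp⟩
  | succ m ih =>
    obtain ⟨q, hq⟩ := ih
    refine ⟨X * q + C (m : R), ?_⟩
    rw [pow_succ, Nat.cast_succ, map_add, map_one]
    linear_combination (X : R[X]) * hq

namespace Polynomial

noncomputable def xi (c : R) : R[X] :=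
  X ^ 3 + C (2 * c - 1) * X ^ 2 - C (c + 2) * X + 1

theorem xi_eq (c : R) :
    xi c = C (3 * c - 1) * (X - 1) + C (c - 1) + (X - 1) ^ 2 * (X - 1 + C (2 * c + 2)) := by
  simp only [xi, map_add, map_sub, map_mul, map_one, map_ofNat]
  ring

theorem sq_X_sub_one_eq (c : R) :
    (X - 1) ^ 2 =
      (C (2*c - 2*c^2 + 2*c^3 - c^4) + C (2*c - 3*c^2 + 3*c^3 - 2*c^4) * (X - 1)
        + C (1 - 2*c + 2*c^2 - c^3) * (X - 1) ^ 2) * (1 - C c * X) ^ 2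
      + (C (2*c - 4*c^2 + 4*c^3 - 3*c^4 + c^5) + C (-c^2 + 2*c^3 - 2*c^4 + c^5) * (X - 1))
        * xi c := by
  simp only [xi, map_add, map_sub, map_mul, map_pow, map_one, map_neg, map_ofNat]
  ring

theorem sq_X_sub_one_mem {c : R} {I : Ideal R[X]} (hξ : xi c ∈ I)
    (h : (1 - C c * X) ^ 2 ∈ I) : (X - 1) ^ 2 ∈ I := by
  rw [sq_X_sub_one_eq c]
  exact add_mem (I.mul_mem_left _ h) (I.mul_mem_left _ hξ)

end Polynomial

theorem ideal_characterization_general (n m : ℕ)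
    (h : ((1 : ℤ[X]) - C (n : ℤ) * X) ^ 2 ∈
      Ideal.span {(X : ℤ[X]) ^ m - 1,
        X ^ 3 + C (2 * (n : ℤ) - 1) * X ^ 2 - C ((n : ℤ) + 2) * X + 1}) :
    Ideal.span {(X : ℤ[X]) ^ m - 1,
        X ^ 3 + C (2 * (n : ℤ) - 1) * X ^ 2 - C ((n : ℤ) + 2) * X + 1} =
      Ideal.span {((X : ℤ[X]) - 1) ^ 2, C (m : ℤ) * (X - 1),
        C (3 * (n : ℤ) - 1) * (X - 1) + C ((n : ℤ) - 1)} := by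
  obtain ⟨q, hq⟩ := X_pow_sub_one_eq_C_mul_add_sq_mul (R := ℤ) m
  exact Ideal.span_pair_eq_span_triple_of_eq_add_mul hq (xi_eq _)
    (sq_X_sub_one_mem (Ideal.subset_span (Set.mem_insert_of_mem _ rfl)) h)

theorem ideal_characterization (n m : ℕ) (hn : 2 ≤ n) (hm : 2 ≤ m)
    (h : ((1 : ℤ[X]) - C (n : ℤ) * X) ^ 2 ∈
      Ideal.span {(X : ℤ[X]) ^ m - 1,
        X ^ 3 + C (2 * (n : ℤ) - 1) * X ^ 2 - C ((n : ℤ) + 2) * X + 1}) :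
    Ideal.span {(X : ℤ[X]) ^ m - 1,
        X ^ 3 + C (2 * (n : ℤ) - 1) * X ^ 2 - C ((n : ℤ) + 2) * X + 1} =
      Ideal.span {((X : ℤ[X]) - 1) ^ 2, C (m : ℤ) * (X - 1),
        C (3 * (n : ℤ) - 1) * (X - 1) + C ((n : ℤ) - 1)} :=
  ideal_characterization_general n m h
end

section
/- Let n, m ≥ 2 with gcd(m, n-1) = 1, and suppose the ideal I of ℤ[x] equals ⟨(x-1)², m(x-1), (3n-1)(x-1) + (n-1)⟩. Then I = ⟨x - 1, n - 1⟩, and consequently ℤ[x]/I ≅ ℤ/(n-1)ℤ as abelian groups. -/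
/-!
Write `a = x - 1` and `u = n - 1`. The third generator `c a + u` (with `c = 3n - 1`) gives
`u a = a (c a + u) - c a²` in `I`; together with `m a` and a Bézout relation `s m + t u = 1` this
puts `a` itself in `I`, and then `u = (c a + u) - c a`. Hence `I = (x - 1, n - 1)`, and evaluating
at `x = 1` identifies `ℤ[x] / (x - 1, n - 1)` with `ℤ / (n - 1)`.
-/

open Polynomial

theorem Ideal.span_sq_mul_add_eq_span_pair {R : Type*} [CommRing R] {a m u : R} (c : R)
    (h : IsCoprime m u) :
    Ideal.span {a ^ 2, m * a, c * a + u} = Ideal.span {a, u} := by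
  set I := Ideal.span {a ^ 2, m * a, c * a + u}
  have ha2 : a ^ 2 ∈ I := Ideal.subset_span (by simp)
  have hma : m * a ∈ I := Ideal.subset_span (by simp)
  have hcau : c * a + u ∈ I := Ideal.subset_span (by simp)
  have hua : u * a ∈ I := by
    have : u * a = a * (c * a + u) - c * a ^ 2 := by ring
    rw [this]
    exact sub_mem (I.mul_mem_left _ hcau) (I.mul_mem_left _ ha2)
  have ha : a ∈ I := by
    obtain ⟨s, t, hst⟩ := h
    have : a = s * (m * a) + t * (u * a) := by linear_combination (-a) * hst
    rw [this]
    exact add_mem (I.mul_mem_left _ hma) (I.mul_mem_left _ hua)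
  have hu : u ∈ I := by
    have : u = (c * a + u) - c * a := by ring
    rw [this]
    exact sub_mem hcau (I.mul_mem_left _ ha)
  apply le_antisymm
  · have ha' : a ∈ Ideal.span {a, u} := Ideal.subset_span (by simp)
    have hu' : u ∈ Ideal.span {a, u} := Ideal.subset_span (by simp)
    rw [Ideal.span_le, Set.insert_subset_iff, Set.insert_subset_iff, Set.singleton_subset_iff]
    exact ⟨Ideal.pow_mem_of_mem _ ha' 2 two_pos, Ideal.mul_mem_left _ _ ha',
      add_mem (Ideal.mul_mem_left _ _ ha') hu'⟩
  · rw [Ideal.span_le, Set.insert_subset_iff, Set.singleton_subset_iff]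
    exact ⟨ha, hu⟩

noncomputable def Polynomial.quotientSpanXSubOneNatCastEquivZMod (k : ℕ) :
    ℤ[X] ⧸ Ideal.span {(X : ℤ[X]) - 1, C (k : ℤ)} ≃+* ZMod k :=
  (Ideal.quotEquivOfEq (by rw [Set.pair_comm, C_1])).trans <|
    (quotientSpanCXSubCAlgEquiv (k : ℤ) 1).toRingEquiv.trans (Int.quotientSpanNatEquivZMod k)

theorem coprime_case_general (n m : ℕ) (hn : 2 ≤ n) (hcop : Nat.Coprime m (n - 1))
    (I : Ideal ℤ[X])
    (hI : I = Ideal.span {((X : ℤ[X]) - 1) ^ 2, C (m : ℤ) * (X - 1),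
      C (3 * (n : ℤ) - 1) * (X - 1) + C ((n : ℤ) - 1)}) :
    I = Ideal.span {(X : ℤ[X]) - 1, C ((n : ℤ) - 1)} ∧
      Nonempty ((ℤ[X] ⧸ I) ≃+ ZMod (n - 1)) := by
  have hcast : ((n - 1 : ℕ) : ℤ) = n - 1 := by omega
  have hcopC : IsCoprime (C (m : ℤ)) (C ((n : ℤ) - 1)) := by
    rw [← hcast]
    exact (Nat.isCoprime_iff_coprime.mpr hcop).map C
  have hIJ := hI.trans (Ideal.span_sq_mul_add_eq_span_pair _ hcopC)
  refine ⟨hIJ, ⟨?_⟩⟩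
  rw [hIJ, ← hcast]
  exact (quotientSpanXSubOneNatCastEquivZMod (n - 1)).toAddEquiv

theorem coprime_case (n m : ℕ) (hn : 2 ≤ n) (hm : 2 ≤ m) (hcop : Nat.Coprime m (n - 1))
    (I : Ideal ℤ[X])
    (hI : I = Ideal.span {((X : ℤ[X]) - 1) ^ 2, C (m : ℤ) * (X - 1),
      C (3 * (n : ℤ) - 1) * (X - 1) + C ((n : ℤ) - 1)}) :
    I = Ideal.span {(X : ℤ[X]) - 1, C ((n : ℤ) - 1)} ∧
      Nonempty ((ℤ[X] ⧸ I) ≃+ ZMod (n - 1)) :=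
  coprime_case_general n m hn hcop I hI
end

section
/- Let m = 2b+1 be an odd prime, a ≥ 1, and n = am + 1. Then the ideal ⟨(x-1)², m(x-1), 2(x-1) + am⟩ of ℤ[x] equals ⟨am², x - (1 + abm)⟩, and the quotient ℤ[x]/⟨am², x - (1+abm)⟩ is isomorphic as an abelian group to ℤ/am²ℤ. -/
/-! With `t = x - 1` each generator of either ideal is an explicit combination of the
generators of the other; the only input is `m - 2b = 1`, which turns `2t + am` into
`am² + 2 (t - abm)` and `mt - b (2t + am)` into `t - abm`. Modulo `x - (1 + abm)` every
polynomial is congruent to a constant, so the quotient is `ℤ ⧸ am²`. -/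

open Polynomial

theorem Ideal.span_sq_mul_add_eq_span_mul_sq_sub {S : Type*} [CommRing S] (t a m b : S)
    (hmb : m = 2 * b + 1) :
    Ideal.span {t ^ 2, m * t, 2 * t + a * m} = Ideal.span {a * m ^ 2, t - a * b * m} := by
  apply le_antisymm
  · rw [Ideal.span_le]
    rintro p (rfl | rfl | rfl) <;> rw [SetLike.mem_coe, Ideal.mem_span_pair]
    · exact ⟨a * b ^ 2, t + a * b * m, by ring⟩
    · exact ⟨b, m, by ring⟩
    · exact ⟨1, 2, by rw [hmb]; ring⟩
  · set I := Ideal.span {t ^ 2, m * t, 2 * t + a * m}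
    have hmt : m * t ∈ I := Ideal.subset_span (by simp)
    have hlin : 2 * t + a * m ∈ I := Ideal.subset_span (by simp)
    rw [Ideal.span_le]
    rintro p (rfl | rfl) <;> rw [SetLike.mem_coe]
    · rw [show a * m ^ 2 = m * (2 * t + a * m) - 2 * (m * t) by ring]
      exact I.sub_mem (I.mul_mem_left m hlin) (I.mul_mem_left 2 hmt)
    · rw [show t - a * b * m = m * t - b * (2 * t + a * m) by rw [hmb]; ring]
      exact I.sub_mem hmt (I.mul_mem_left b hlin)

noncomputable def Polynomial.quotientSpanNatCastXSubCRingEquivZMod (n : ℕ) (r : ℤ) :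
    (ℤ[X] ⧸ Ideal.span {C (n : ℤ), X - C r}) ≃+* ZMod n :=
  (quotientSpanCXSubCAlgEquiv (n : ℤ) r).toRingEquiv.trans (Int.quotientSpanNatEquivZMod n)

theorem odd_prime_case_general (m a b : ℕ) (hmb : m = 2 * b + 1) :
    Ideal.span {((X : ℤ[X]) - 1) ^ 2, C (m : ℤ) * (X - 1),
        2 * (X - 1) + C ((a : ℤ) * m)} =
      Ideal.span {(C ((a : ℤ) * m ^ 2) : ℤ[X]), X - C (1 + (a : ℤ) * b * m)} ∧
    Nonempty ((ℤ[X] ⧸ Ideal.span {(C ((a : ℤ) * m ^ 2) : ℤ[X]),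
        X - C (1 + (a : ℤ) * b * m)}) ≃+ ZMod (a * m ^ 2)) := by
  constructor
  · have hCm : C (m : ℤ) = 2 * C (b : ℤ) + 1 := by simp [hmb]
    have hspan := Ideal.span_sq_mul_add_eq_span_mul_sq_sub (X - 1) (C (a : ℤ)) _ _ hCm
    simpa only [map_mul, map_pow, map_add, map_one, sub_add_eq_sub_sub] using hspan
  · have hcast : ((a * m ^ 2 : ℕ) : ℤ) = (a : ℤ) * m ^ 2 := by push_cast; ring
    rw [← hcast]
    exact ⟨(quotientSpanNatCastXSubCRingEquivZMod _ _).toAddEquiv⟩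

theorem odd_prime_case (m a b : ℕ) (hm : Nat.Prime m) (hb : 1 ≤ b) (hmb : m = 2 * b + 1)
    (ha : 1 ≤ a) :
    Ideal.span {((X : ℤ[X]) - 1) ^ 2, C (m : ℤ) * (X - 1),
        2 * (X - 1) + C ((a : ℤ) * m)} =
      Ideal.span {(C ((a : ℤ) * m ^ 2) : ℤ[X]), X - C (1 + (a : ℤ) * b * m)} ∧
    Nonempty ((ℤ[X] ⧸ Ideal.span {(C ((a : ℤ) * m ^ 2) : ℤ[X]),
        X - C (1 + (a : ℤ) * b * m)}) ≃+ ZMod (a * m ^ 2)) :=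
  odd_prime_case_general m a b hmb
end
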